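/- arXiv:1004.3973 — 4 statements merged into one kernel-verified Lean document; each statement's English description precedes it below -/
import Mathlib

section
/- Let S be a semigroup and P a primitive predicate on S with S_P = {s ∈ S | P(s)}. Then rk(S) = rk(S_P) + rk(S : S_P), where rk(S) denotes the minimal cardinality of a generating set of S, and rk(S : S_P) denotes the minimal cardinality of a set X ⊆ S such that S_P ∪ X generates S. -/
/-- The rank of a semigroup: the least cardinality of a generating set. -/
noncomputable def sgRank (S : Type*) [Mul S] : Cardinal :=
  ⨅ X : {X : Set S // Subsemigroup.closure X = ⊤}, Cardinal.mk X

/-- The relative rank `rk(S : B)` of a subset `B` of a semigroup `S`: the least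
cardinality of a set `X` with `⟨B ∪ X⟩ = S`. -/
noncomputable def sgRelRank (S : Type*) [Mul S] (B : Set S) : Cardinal :=
  ⨅ X : {X : Set S // Subsemigroup.closure (B ∪ X) = ⊤}, Cardinal.mk X


/-! A generating set of `S` splits into its elements inside and outside `S_P`. Since `P` is
primitive, a product lies in `S_P` only if all of its factors do, so the part inside `S_P`
generates `S_P`, while the part outside, together with `S_P`, generates `S`. Conversely a
generating set of `S_P` together with a set `X` with `⟨S_P ∪ X⟩ = S` generates `S`. -/

open Cardinal

section Rank

variable {S : Type*} [Mul S]

theorem sgRank_le_mk {X : Set S} (hX : Subsemigroup.closure X = ⊤) : sgRank S ≤ #X :=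
  ciInf_le (OrderBot.bddBelow _) (⟨X, hX⟩ : {X : Set S // Subsemigroup.closure X = ⊤})

theorem le_sgRank {c : Cardinal} (h : ∀ X : Set S, Subsemigroup.closure X = ⊤ → c ≤ #X) :
    c ≤ sgRank S :=
  have : Nonempty {X : Set S // Subsemigroup.closure X = ⊤} :=
    ⟨⟨Set.univ, Subsemigroup.closure_univ⟩⟩
  le_ciInf fun X => h X.1 X.2

theorem exists_closure_eq_top_mk_eq_sgRank :
    ∃ X : Set S, Subsemigroup.closure X = ⊤ ∧ #X = sgRank S := by
  have : Nonempty {X : Set S // Subsemigroup.closure X = ⊤} :=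
    ⟨⟨Set.univ, Subsemigroup.closure_univ⟩⟩
  obtain ⟨X, hX⟩ := csInf_mem (Set.range_nonempty
    fun X : {X : Set S // Subsemigroup.closure X = ⊤} => #X.1)
  exact ⟨X.1, X.2, hX⟩

theorem sgRelRank_le_mk {B X : Set S} (hX : Subsemigroup.closure (B ∪ X) = ⊤) :
    sgRelRank S B ≤ #X :=
  ciInf_le (OrderBot.bddBelow _) (⟨X, hX⟩ : {X : Set S // Subsemigroup.closure (B ∪ X) = ⊤})

theorem exists_closure_union_eq_top_mk_eq_sgRelRank (B : Set S) :
    ∃ X : Set S, Subsemigroup.closure (B ∪ X) = ⊤ ∧ #X = sgRelRank S B := by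
  have : Nonempty {X : Set S // Subsemigroup.closure (B ∪ X) = ⊤} :=
    ⟨⟨Set.univ, by rw [Set.union_univ, Subsemigroup.closure_univ]⟩⟩
  obtain ⟨X, hX⟩ := csInf_mem (Set.range_nonempty
    fun X : {X : Set S // Subsemigroup.closure (B ∪ X) = ⊤} => #X.1)
  exact ⟨X.1, X.2, hX⟩

end Rank

section Subsemigroup

variable {S : Type*} [Mul S] (T : Subsemigroup S)

theorem Subsemigroup.closure_image_val_eq {Y : Set T} (hY : closure Y = ⊤) :
    closure (Subtype.val '' Y) = T := by
  have := MulHom.map_mclosure (MulMemClass.subtype T) Y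
  rwa [hY, ← MulHom.srange_eq_map, range_subtype, MulMemClass.coe_subtype, eq_comm] at this

theorem Subsemigroup.closure_preimage_val_eq_top (hT : ∀ a b, a * b ∈ T → a ∈ T ∧ b ∈ T)
    {Z : Set S} (hZ : closure Z = ⊤) : closure (Subtype.val ⁻¹' Z : Set T) = ⊤ := by
  refine eq_top_iff.2 fun ⟨x, hxT⟩ _ => ?_
  refine closure_induction (p := fun x _ => ∀ hx : x ∈ T,
    (⟨x, hx⟩ : T) ∈ closure (Subtype.val ⁻¹' Z : Set T))
    (fun z hz _ => subset_closure hz) (fun y z _ _ hy hz hyz => ?_) (hZ ▸ mem_top x) hxT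
  obtain ⟨hyT, hzT⟩ := hT y z hyz
  exact mul_mem (hy hyT) (hz hzT)

theorem sgRank_le_sgRank_add_sgRelRank : sgRank S ≤ sgRank T + sgRelRank S T := by
  obtain ⟨Y, hY, hYT⟩ := exists_closure_eq_top_mk_eq_sgRank (S := T)
  obtain ⟨X, hX, hXT⟩ := exists_closure_union_eq_top_mk_eq_sgRelRank (T : Set S)
  have hgen : Subsemigroup.closure (Subtype.val '' Y ∪ X) = ⊤ := by
    rw [eq_top_iff, ← hX, Subsemigroup.closure_le, Set.union_subset_iff]
    constructor
    · exact SetLike.coe_subset_coe.2 <|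
        (T.closure_image_val_eq hY).ge.trans (Subsemigroup.closure_mono Set.subset_union_left)
    · exact Set.subset_union_right.trans Subsemigroup.subset_closure
  calc sgRank S ≤ #(Subtype.val '' Y ∪ X : Set S) := sgRank_le_mk hgen
    _ ≤ #(Subtype.val '' Y) + #X := mk_union_le _ _
    _ = sgRank T + sgRelRank S T := by rw [mk_image_eq Subtype.val_injective, hYT, hXT]

theorem sgRank_add_sgRelRank_le_sgRank (hT : ∀ a b, a * b ∈ T → a ∈ T ∧ b ∈ T) :
    sgRank T + sgRelRank S T ≤ sgRank S := by
  refine le_sgRank fun Z hZ => ?_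
  have hZout : Subsemigroup.closure ((T : Set S) ∪ Z \ T) = ⊤ := by
    rw [Set.union_sdiff_self, eq_top_iff, ← hZ]
    exact Subsemigroup.closure_mono Set.subset_union_right
  calc sgRank T + sgRelRank S T ≤ #(Subtype.val ⁻¹' Z : Set T) + #(Z \ T : Set S) :=
        add_le_add (sgRank_le_mk (T.closure_preimage_val_eq_top hT hZ)) (sgRelRank_le_mk hZout)
    _ = #(Z \ (T ∩ Z) : Set S) + #(T ∩ Z : Set S) := by
        rw [← mk_image_eq Subtype.val_injective, Set.image_preimage_eq_range_inter,
          Subtype.range_coe_subtype, SetLike.setOfPred_mem_eq,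
          Set.sdiff_inter_self_eq_sdiff, add_comm]
    _ = #Z := mk_sdiff_add_mk Set.inter_subset_right

end Subsemigroup

/-- For a primitive predicate `P` on a semigroup `S` with
`S_P = {s | P s}` one has `rk(S) = rk(S_P) + rk(S : S_P)`. -/
theorem rank_eq_rank_add_relRank (S : Type*) [Semigroup S] (P : S → Prop)
    (hP : ∀ a b : S, P (a * b) ↔ P a ∧ P b) :
    sgRank S =
      sgRank (⟨{s : S | P s}, fun {a b} ha hb => (hP a b).2 ⟨ha, hb⟩⟩ : Subsemigroup S) +
        sgRelRank S {s : S | P s} :=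
  le_antisymm (sgRank_le_sgRank_add_sgRelRank _)
    (sgRank_add_sgRelRank_le_sgRank _ fun a b => (hP a b).1)
end

section
/- Let G be a group, m ≥ 1, g ∈ G an element of finite odd order, and σ ∈ G an element of order 2. Let H be the subgroup of the wreath product G ≀ S_m generated by a = [σ,2]·(1,…,m) and b = [g,3]·(1,2). Then the elements [g,3], [σ,1], the m-cycle (1,…,m), and the transposition (1,2) all lie in H. -/
open Equiv

/-- The permutation action of `S_m` on `G^m`, `(π • f) j = f (π⁻¹ j)`. -/
def permHom (G : Type*) [Group G] (m : ℕ) : Equiv.Perm (Fin m) →* MulAut (Fin m → G) where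
  toFun π := { Equiv.arrowCongr π (Equiv.refl G) with map_mul' := fun f g => rfl }
  map_one' := by ext f i; rfl
  map_mul' π σ := by ext f i; rfl

/-- The wreath product `G ≀ S_m = G^m ⋊ S_m`. -/
abbrev Wr (G : Type*) [Group G] (m : ℕ) : Type _ :=
  SemidirectProduct (Fin m → G) (Equiv.Perm (Fin m)) (permHom G m)


/-!
Since `g` has odd order it is a power of `g²`, and `b² = [g²,3]` because `(1,2)` fixes `3`;
so `[g,3] ∈ H` and `(1,2) = [g,3]⁻¹ b ∈ H`. Conjugation by `a` acts on a permutation `p` as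
conjugation by the `m`-cycle `c = (1,…,m)` does, as long as `c p c⁻¹` fixes the coordinate `2`
carrying `σ`; this is the case for the transpositions `cʲ (1,2) c⁻ʲ`, `j < m - 1`, which therefore lie in `H`.
Their product telescopes to `((1,2) c)^(m-1) c^(1-m) = c`, since `(1,2) c` is an `(m-1)`-cycle.
Finally `[σ,2] = a c⁻¹`, and `[σ,1]` is its conjugate by `(1,2)`.
-/

namespace SemidirectProduct

variable {N G : Type*} [Group N] [Group G] {φ : G →* MulAut N}

theorem inr_mul_inl_of_fixed {g : G} {n : N} (h : φ g n = n) :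
    (inr g : N ⋊[φ] G) * inl n = inl n * inr g := by
  ext <;> simp [h]

theorem conj_inr_eq_of_fixed {n : N} {g h : G} (hfix : φ (g * h * g⁻¹) n = n) :
    (inl n * inr g : N ⋊[φ] G) * inr h * (inl n * inr g)⁻¹ = inr (g * h * g⁻¹) := by
  calc (inl n * inr g : N ⋊[φ] G) * inr h * (inl n * inr g)⁻¹
      = inl n * inr (g * h * g⁻¹) * (inl n)⁻¹ := by simp [mul_assoc]
    _ = inr (g * h * g⁻¹) := by rw [← inr_mul_inl_of_fixed hfix, mul_inv_cancel_right]

theorem inr_conj_pow_mem {H : Subgroup (N ⋊[φ] G)} {n : N} {g h : G} (hgn : inl n * inr g ∈ H)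
    (hh : inr h ∈ H) {k : ℕ} (hfix : ∀ j < k, φ (g ^ (j + 1) * h * (g ^ (j + 1))⁻¹) n = n) :
    inr (g ^ k * h * (g ^ k)⁻¹) ∈ H := by
  induction k with
  | zero => simpa
  | succ k ih =>
    have hconj := conj_inr_eq_of_fixed (g := g) (h := g ^ k * h * (g ^ k)⁻¹) (n := n)
      (by simpa [pow_succ', mul_assoc] using hfix k k.lt_succ_self)
    rw [show g * (g ^ k * h * (g ^ k)⁻¹) * g⁻¹ = g ^ (k + 1) * h * (g ^ (k + 1))⁻¹ by group]
      at hconj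
    rw [← hconj]
    exact mul_mem (mul_mem hgn (ih fun j hj => hfix j (by omega))) (inv_mem hgn)

end SemidirectProduct

-- The product `∏_{j<k} y^j x y⁻ʲ` telescopes to `(x y)^k y⁻ᵏ`.
theorem Subgroup.mul_pow_mul_inv_pow_mem {M : Type*} [Group M] (K : Subgroup M) {x y : M} {k : ℕ}
    (h : ∀ j < k, y ^ j * x * (y ^ j)⁻¹ ∈ K) : (x * y) ^ k * (y ^ k)⁻¹ ∈ K := by
  induction k with
  | zero => simp
  | succ k ih =>
    have hstep : (x * y) ^ (k + 1) * (y ^ (k + 1))⁻¹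
        = ((x * y) ^ k * (y ^ k)⁻¹) * (y ^ k * x * (y ^ k)⁻¹) := by
      simp only [pow_succ, mul_inv_rev, mul_assoc, inv_mul_cancel_left, mul_inv_cancel_left]
    rw [hstep]
    exact mul_mem (ih fun j hj => h j (by omega)) (h k k.lt_succ_self)

theorem mem_powers_sq_of_odd_orderOf {M : Type*} [Monoid M] {x : M} (hx : Odd (orderOf x)) :
    x ∈ Submonoid.powers (x ^ 2) := by
  obtain ⟨k, hk⟩ := hx
  refine (Submonoid.mem_powers_iff _ _).mpr ⟨k + 1, ?_⟩
  rw [← pow_mul, show 2 * (k + 1) = orderOf x + 1 by omega, pow_succ, pow_orderOf_eq_one, one_mul]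

theorem permHom_mulSingle {G : Type*} [Group G] {m : ℕ} (p : Equiv.Perm (Fin m)) (i : Fin m)
    (x : G) :
    permHom G m p (Pi.mulSingle i x : Fin m → G) = (Pi.mulSingle (p i) x : Fin m → G) := by
  ext j
  change (Pi.mulSingle i x : Fin m → G) (p⁻¹ j) = _
  simp [Pi.mulSingle_apply, Equiv.symm_apply_eq]

theorem Equiv.Perm.IsCycle.swap_mul_pow_card_support_sub_one {α : Type*} [Fintype α]
    [DecidableEq α] {f : Equiv.Perm α} (hf : f.IsCycle) {x : α} (hx : f x ≠ x)
    (hffx : f (f x) ≠ x) :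
    (swap x (f x) * f) ^ (f.support.card - 1) = 1 := by
  have hcard : (swap x (f x) * f).support.card = f.support.card - 1 := by
    rw [Equiv.Perm.support_swap_mul_eq f x hffx, Finset.sdiff_singleton_eq_erase,
      Finset.card_erase_of_mem (Equiv.Perm.mem_support.mpr hx)]
  rw [← hcard, ← (hf.swap_mul hx hffx).orderOf, pow_orderOf_eq_one]

theorem finRotate_pow_apply_mk {m i j : ℕ} (h : i + j < m) :
    (finRotate m ^ j) ⟨i, by omega⟩ = ⟨i + j, h⟩ := by
  induction j with
  | zero => rfl
  | succ j ih =>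
    obtain ⟨n, rfl⟩ : ∃ n, m = n + 1 := ⟨m - 1, by omega⟩
    rw [pow_succ', Equiv.Perm.mul_apply, ih (by omega), finRotate_of_lt (by omega)]
    rfl

theorem card_support_finRotate {m : ℕ} (hm : 2 ≤ m) : (finRotate m).support.card = m := by
  rw [support_finRotate_of_le hm, Finset.card_univ, Fintype.card_fin]

theorem finRotate_pow_self {m : ℕ} (hm : 2 ≤ m) : finRotate m ^ m = 1 := by
  have horder := (isCycle_finRotate_of_le hm).orderOf
  rw [card_support_finRotate hm] at horder
  simpa [horder] using pow_orderOf_eq_one (finRotate m)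

theorem finRotate_mul_swap_pow {m : ℕ} (hm : 2 < m) :
    (finRotate m * swap ⟨0, by omega⟩ ⟨1, by omega⟩) ^ (m - 1) = 1 := by
  have hr0 : finRotate m ⟨0, by omega⟩ = ⟨1, by omega⟩ := finRotate_pow_apply_mk (j := 1) (by omega)
  have hr1 : finRotate m ⟨1, by omega⟩ = ⟨2, by omega⟩ := finRotate_pow_apply_mk (j := 1) (by omega)
  have hr2 : finRotate m (finRotate m ⟨1, by omega⟩) ≠ ⟨1, by omega⟩ := by
    rw [hr1, ← hr0, (finRotate m).injective.ne_iff]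
    simp [Fin.ext_iff]
  have hpow := (isCycle_finRotate_of_le (by omega)).swap_mul_pow_card_support_sub_one
    (by rw [hr1]; simp [Fin.ext_iff]) hr2
  have hshift : finRotate m * swap ⟨0, by omega⟩ ⟨1, by omega⟩ =
      swap ⟨1, by omega⟩ (finRotate m ⟨1, by omega⟩) * finRotate m := by
    rw [mul_swap_eq_swap_mul, hr0]
  rw [hshift]
  rwa [card_support_finRotate (by omega)] at hpow

theorem finRotate_inv_pow_conj_swap_apply_one {m j : ℕ} (hj : j + 1 < m) (hj0 : 0 < j) :
    ((finRotate m)⁻¹ ^ j * swap (⟨0, by omega⟩ : Fin m) ⟨1, by omega⟩ * ((finRotate m)⁻¹ ^ j)⁻¹)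
      ⟨1, by omega⟩ = (⟨1, by omega⟩ : Fin m) := by
  rw [inv_pow, inv_inv, Perm.mul_apply, Perm.mul_apply, finRotate_pow_apply_mk (by omega),
    swap_apply_of_ne_of_ne (by simp [Fin.ext_iff]) (by simp [Fin.ext_iff]; omega),
    ← finRotate_pow_apply_mk (by omega)]
  exact (finRotate m ^ j).symm_apply_apply _

theorem swap_mul_finRotate_inv_pow_mul_inv_pow {m : ℕ} (hm : 2 < m) :
    (swap ⟨0, by omega⟩ ⟨1, by omega⟩ * (finRotate m)⁻¹) ^ (m - 1) *
      ((finRotate m)⁻¹ ^ (m - 1))⁻¹ = (finRotate m)⁻¹ := by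
  have hcycle : (swap ⟨0, by omega⟩ ⟨1, by omega⟩ * (finRotate m)⁻¹) ^ (m - 1) = 1 := by
    rw [← swap_inv, ← mul_inv_rev, inv_pow, finRotate_mul_swap_pow hm, inv_one]
  have hpred : finRotate m ^ (m - 1) * finRotate m = 1 := by
    rw [← pow_succ, Nat.sub_add_cancel (by omega), finRotate_pow_self (by omega)]
  rw [hcycle, one_mul, inv_pow, inv_inv, eq_inv_iff_mul_eq_one, hpred]

open SemidirectProduct in
/-- Let `g ∈ G` have odd (finite) order and `σ ∈ G` order `2`. If `H` is the
subgroup of `G ≀ S_m` generated by `a = [σ,2]·(1,…,m)` and `b = [g,3]·(1,2)`, then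
`[g,3]`, `[σ,1]`, the `m`-cycle `(1,…,m)` and the transposition `(1,2)` all lie in `H`.
(Coordinates are `0`-indexed here, and the paper's `m`-cycle corresponds to
`(finRotate m)⁻¹` under the translation from left-to-right to Mathlib conventions.) -/
theorem strange_generators (G : Type*) [Group G] (m : ℕ) (hm : 3 ≤ m) (g σ : G)
    (hg : Odd (orderOf g)) :
    let i1 : Fin m := ⟨0, by omega⟩
    let i2 : Fin m := ⟨1, by omega⟩
    let i3 : Fin m := ⟨2, by omega⟩
    let c : Equiv.Perm (Fin m) := (finRotate m)⁻¹
    let a : Wr G m := inl (Pi.mulSingle i2 σ) * inr c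
    let b : Wr G m := inl (Pi.mulSingle i3 g) * inr (Equiv.swap i1 i2)
    let H : Subgroup (Wr G m) := Subgroup.closure {a, b}
    inl (Pi.mulSingle i3 g) ∈ H ∧ inl (Pi.mulSingle i1 σ) ∈ H ∧
      inr c ∈ H ∧ inr (Equiv.swap i1 i2) ∈ H := by
  intro i1 i2 i3 c a b H
  have ha : a ∈ H := Subgroup.subset_closure (by simp)
  have hb : b ∈ H := Subgroup.subset_closure (by simp)
  have hg3 : inl (Pi.mulSingle i3 g) ∈ H := by
    obtain ⟨k, hk⟩ := (Submonoid.mem_powers_iff _ _).mp (mem_powers_sq_of_odd_orderOf hg)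
    have hcomm : Commute (inl (Pi.mulSingle i3 g) : Wr G m) (inr (swap i1 i2)) :=
      (inr_mul_inl_of_fixed (by rw [permHom_mulSingle]; rfl)).symm
    have hτ2 : (inr (swap i1 i2) : Wr G m) ^ 2 = 1 := by
      rw [← map_pow, sq, swap_mul_self, map_one]
    have hu : (inl (Pi.mulSingle i3 g) : Wr G m) ^ (2 * k) = inl (Pi.mulSingle i3 g) := by
      rw [← map_pow, ← Pi.mulSingle_pow, pow_mul, hk]
    have hpow : b ^ (2 * k) = inl (Pi.mulSingle i3 g) := by
      rw [hcomm.mul_pow, hu, pow_mul, hτ2, one_pow, mul_one]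
    exact hpow ▸ pow_mem hb _
  have hτ : inr (swap i1 i2) ∈ H := by
    simpa [b] using mul_mem (inv_mem hg3) hb
  have hc : inr c ∈ H := by
    have hconj : ∀ j < m - 1, inr (c ^ j * swap i1 i2 * (c ^ j)⁻¹) ∈ H := fun j hj =>
      inr_conj_pow_mem ha hτ fun l hl => by
        rw [permHom_mulSingle, finRotate_inv_pow_conj_swap_apply_one (by omega) l.succ_pos]
    have hprod := (H.comap inr).mul_pow_mul_inv_pow_mem (x := swap i1 i2) (y := c) hconj
    rwa [swap_mul_finRotate_inv_pow_mul_inv_pow hm] at hprod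
  have hs2 : inl (Pi.mulSingle i2 σ) ∈ H := by
    simpa [a] using mul_mem ha (inv_mem hc)
  have hs1 : inl (Pi.mulSingle i1 σ) ∈ H := by
    have hτs := mul_mem (mul_mem hτ hs2) (inv_mem hτ)
    rwa [← map_inv, ← inl_aut, permHom_mulSingle, swap_apply_right] at hτs
  exact ⟨hg3, hs1, hc, hτ⟩
end

section
/- Let n₁,…,n_k ≥ 2. The parity homomorphism ε : S_{n_k} ≀ S_{n_{k-1}} ≀ ⋯ ≀ S_{n_1} → (ℤ/2)^k, sending an element of the iterated wreath product to the tuple of signs of its induced permutations on each level, is surjective. -/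
open Equiv

/-- The iterated wreath product `S_{n_k} ≀ ⋯ ≀ S_{n_1}` as a bundled group:
`IWGrp [] = 1` and `IWGrp (n₁ :: ns) = IWGrp ns ≀ S_{n₁} = (IWGrp ns)^{n₁} ⋊ S_{n₁}`. -/
def IWGrp : List ℕ → GrpCat
  | [] => GrpCat.of PUnit
  | n :: ns => GrpCat.of ((Fin n → IWGrp ns) ⋊[permHom (IWGrp ns) n] Equiv.Perm (Fin n))

/-- The underlying type of the iterated wreath product. -/
abbrev IW (ns : List ℕ) : Type := IWGrp ns

/-- The sign of a permutation, written additively in `ℤ/2`. -/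
def sign2 {m : ℕ} (π : Equiv.Perm (Fin m)) : ZMod 2 :=
  if Equiv.Perm.sign π = 1 then 0 else 1

/-- The level-wise parity map `ε : S_{n_k} ≀ ⋯ ≀ S_{n_1} → (ℤ/2)^k`: the `j`-th entry is
the sign of the permutation induced on `[1..n₁] × ⋯ × [1..n_j]`.  (For `x = (f, π)` the
permutation induced on level `j+1` is built from `π` permuting the `n₁` blocks, each of
size `n₂⋯n_{j+1}`, composed with the level-`j` permutations induced by the `f i`;
its sign is `sign(π)^{n₂⋯n_{j+1}} · ∏ᵢ sign_j(f i)`, written below additively.) -/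
def eps : (ns : List ℕ) → IW ns → List (ZMod 2)
  | [], _ => []
  | n :: ns, x =>
    let y := (x : (Fin n → IW ns) ⋊[permHom (IW ns) n] Equiv.Perm (Fin n))
    sign2 y.right ::
      (List.range ns.length).map fun j =>
        ((ns.take j).prod : ZMod 2) * sign2 y.right +
          ∑ i : Fin n, ((eps ns (y.left i)).getD j 0)


/-! Choose the top permutation `π` with the prescribed sign and put a single nontrivial entry
`x` into one coordinate of the base. The sign of `π` then contributes `(n₂⋯n_{j+1}) · sign π`
to level `j + 1`, and by induction `x` can be chosen so that its own parities correct this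
contribution to any prescribed values. -/

lemma sign2_one {m : ℕ} : sign2 (1 : Perm (Fin m)) = 0 := by
  simp [sign2]

lemma exists_sign2_eq {m : ℕ} (hm : 2 ≤ m) (a : ZMod 2) : ∃ π : Perm (Fin m), sign2 π = a := by
  have h01 : (⟨0, by omega⟩ : Fin m) ≠ ⟨1, by omega⟩ := by simp [Fin.ext_iff]
  fin_cases a
  · exact ⟨1, sign2_one⟩
  · exact ⟨swap _ _, by rw [sign2, Perm.sign_swap h01]; rfl⟩

lemma eps_one : ∀ ns : List ℕ, eps ns (1 : IW ns) = List.replicate ns.length 0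
  | [] => rfl
  | n :: ns => by
    show eps (n :: ns) (1 : (Fin n → IW ns) ⋊[permHom (IW ns) n] Perm (Fin n)) = _
    simp [eps, sign2_one, eps_one ns, List.replicate_succ]

lemma eps_cons_mulSingle {n : ℕ} {ns : List ℕ} (i : Fin n) (x : IW ns) (π : Perm (Fin n)) :
    eps (n :: ns) (⟨Pi.mulSingle i x, π⟩ : (Fin n → IW ns) ⋊[permHom (IW ns) n] Perm (Fin n)) =
      sign2 π :: (List.range ns.length).map
        fun j => ((ns.take j).prod : ZMod 2) * sign2 π + (eps ns x).getD j 0 := by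
  simp only [eps]
  congr 1
  refine List.map_congr_left fun j hj => congr_arg _ ?_
  rw [Finset.sum_eq_single i]
  · simp
  · intro k _ hk
    simp [Pi.mulSingle_eq_of_ne hk, eps_one, List.getD_eq_getElem?_getD, List.mem_range.mp hj]
  · simp

lemma exists_map_range_add_getD_eq {R : Type*} [AddCommGroup R] (c : ℕ → R) (l : List R) :
    ∃ m : List R, m.length = l.length ∧
      (List.range l.length).map (fun j => c j + m.getD j 0) = l := by
  refine ⟨(List.range l.length).map fun j => l.getD j 0 - c j, by simp, ?_⟩
  apply List.ext_getElem (by simp)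
  intro j hj _
  rw [List.length_map, List.length_range] at hj
  simp [hj]

/-- For `n₁,…,n_k ≥ 2` the level-wise parity homomorphism
`ε : S_{n_k} ≀ ⋯ ≀ S_{n_1} → (ℤ/2)^k` is surjective. -/
theorem eps_surjective (ns : List ℕ) (h : ∀ n ∈ ns, 2 ≤ n) :
    ∀ l : List (ZMod 2), l.length = ns.length → ∃ x : IW ns, eps ns x = l := by
  induction ns with
  | nil =>
    intro l hl
    exact ⟨1, by simp [List.length_eq_zero_iff.mp hl, eps]⟩
  | cons n ns ih =>
    rintro (_ | ⟨a, l⟩) hl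
    · simp at hl
    replace hl : l.length = ns.length := by simpa using hl
    have hn : 2 ≤ n := h n List.mem_cons_self
    obtain ⟨π, rfl⟩ := exists_sign2_eq hn a
    obtain ⟨m, hm, hml⟩ :=
      exists_map_range_add_getD_eq (fun j => ((ns.take j).prod : ZMod 2) * sign2 π) l
    obtain ⟨x, rfl⟩ := ih (fun k hk => h k (List.mem_cons_of_mem _ hk)) m (hm.trans hl)
    refine ⟨(⟨Pi.mulSingle ⟨0, by omega⟩ x, π⟩ :
      (Fin n → IW ns) ⋊[permHom (IW ns) n] Perm (Fin n)), ?_⟩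
    rw [eps_cons_mulSingle, ← hml, hl]
end

section
/- Let n₁,…,n_k ≥ 2. Then the rank (minimal number of generators) of the iterated wreath product G = S_{n_k} ≀ S_{n_{k-1}} ≀ ⋯ ≀ S_{n_1} is at least k. -/
open Equiv

/-- The rank of a group: the least cardinality of a generating set. -/
noncomputable def grpRank (G : Type*) [Group G] : Cardinal :=
  ⨅ X : {X : Set G // Subgroup.closure X = ⊤}, Cardinal.mk X

/-!
Sending an element of `S_n ≀ H` to the sign of its top permutation together with the product of
the images of its `n` coordinates in an abelian quotient of `H` is a homomorphism, because the
product is invariant under permuting the coordinates. Iterating gives a surjection of the iterated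
wreath product onto `(ℤˣ)^k ≅ (ℤ/2)^k`. A generating set maps to a generating set of `(ℤ/2)^k`,
which spans it as an `𝔽₂`-vector space and therefore has at least `k` elements.
-/

universe u

section grpRank

variable {G : Type u} [Group G]

instance : Nonempty {X : Set G // Subgroup.closure X = ⊤} :=
  ⟨⟨(Set.univ : Set G), Subgroup.closure_univ⟩⟩

theorem grpRank_le {X : Set G} (hX : Subgroup.closure X = ⊤) : grpRank G ≤ Cardinal.mk X :=
  ciInf_le (OrderBot.bddBelow _) (⟨X, hX⟩ : {X : Set G // Subgroup.closure X = ⊤})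

theorem le_grpRank {c : Cardinal} (hc : ∀ X : Set G, Subgroup.closure X = ⊤ → c ≤ Cardinal.mk X) :
    c ≤ grpRank G :=
  le_ciInf fun X ↦ hc X.1 X.2

theorem grpRank_le_of_surjective {H : Type u} [Group H] (f : G →* H)
    (hf : Function.Surjective f) : grpRank H ≤ grpRank G :=
  le_grpRank fun X hX ↦ by
    have hfX : Subgroup.closure (f '' X) = ⊤ := by
      rw [← MonoidHom.map_closure, hX, Subgroup.map_top_of_surjective f hf]
    exact (grpRank_le hfX).trans Cardinal.mk_image_le

end grpRank

theorem rank_le_grpRank_multiplicative (R : Type*) (V : Type u) [Ring R] [StrongRankCondition R]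
    [AddCommGroup V] [Module R V] : Module.rank R V ≤ grpRank (Multiplicative V) :=
  le_grpRank fun X hX ↦ by
    set S : Set V := Multiplicative.ofAdd ⁻¹' X
    have hS : AddSubgroup.closure S = ⊤ := by
      rw [← Subgroup.toAddSubgroup'_closure, hX]; rfl
    have hspan : Submodule.span R S = ⊤ := by
      have hle : AddSubgroup.closure S ≤ (Submodule.span R S).toAddSubgroup :=
        (AddSubgroup.closure_le _).mpr Submodule.subset_span
      exact Submodule.eq_top_iff'.mpr fun v ↦ hle (hS ▸ AddSubgroup.mem_top v)
    calc Module.rank R V = Module.rank R (Submodule.span R S) := by rw [hspan, rank_top]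
      _ ≤ Cardinal.mk S := rank_span_le S
      _ ≤ Cardinal.mk X := Cardinal.mk_preimage_of_injective _ _ Multiplicative.ofAdd.injective

def tupleProd {ι H A : Type*} [Fintype ι] [Group H] [CommGroup A] (f : H →* A) : (ι → H) →* A where
  toFun x := ∏ i, f (x i)
  map_one' := by simp
  map_mul' x y := by simp [Finset.prod_mul_distrib]

theorem tupleProd_mulSingle {ι H A : Type*} [Fintype ι] [DecidableEq ι] [Group H] [CommGroup A]
    (f : H →* A) (i : ι) (h : H) : tupleProd f (Pi.mulSingle i h) = f h := by
  simp [tupleProd, Pi.apply_mulSingle (fun _ ↦ f) (fun _ ↦ map_one f)]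

theorem tupleProd_permHom {H A : Type*} [Group H] [CommGroup A] (f : H →* A) {n : ℕ}
    (π : Equiv.Perm (Fin n)) (x : Fin n → H) : tupleProd f (permHom H n π x) = tupleProd f x :=
  Equiv.prod_comp π.symm fun i ↦ f (x i)

section wreath

variable {H A : Type*} [Group H] [CommGroup A] {n : ℕ}

def wreathSignHom (f : H →* A) : (Fin n → H) ⋊[permHom H n] Equiv.Perm (Fin n) →* ℤˣ × A :=
  SemidirectProduct.lift ((MonoidHom.inr ℤˣ A).comp (tupleProd f))
    ((MonoidHom.inl ℤˣ A).comp Equiv.Perm.sign) fun π ↦ by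
      ext x <;> simp [tupleProd_permHom]

theorem wreathSignHom_surjective (hn : 2 ≤ n) {f : H →* A} (hf : Function.Surjective f) :
    Function.Surjective (wreathSignHom (n := n) f) := by
  have : NeZero n := ⟨by omega⟩
  have : Nontrivial (Fin n) := Fin.nontrivial_iff_two_le.mpr hn
  rintro ⟨s, a⟩
  obtain ⟨π, rfl⟩ := Equiv.Perm.sign_surjective (Fin n) s
  obtain ⟨h, rfl⟩ := hf a
  refine ⟨SemidirectProduct.inl (Pi.mulSingle 0 h) * SemidirectProduct.inr π, ?_⟩
  simp [wreathSignHom, tupleProd_mulSingle]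

end wreath

def finConsMulEquiv (M : Type*) [Mul M] (k : ℕ) : M × (Fin k → M) ≃* (Fin (k + 1) → M) :=
  { Fin.consEquiv fun _ ↦ M with
    map_mul' := fun _ _ ↦ funext fun j ↦ Fin.cases rfl (fun _ ↦ rfl) j }

def iwSigns : (ns : List ℕ) → IW ns →* (Fin ns.length → ℤˣ)
  | [] => 1
  | n :: ns => (finConsMulEquiv ℤˣ ns.length).toMonoidHom.comp (wreathSignHom (n := n) (iwSigns ns))

theorem iwSigns_surjective : (ns : List ℕ) → (∀ n ∈ ns, 2 ≤ n) → Function.Surjective (iwSigns ns)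
  | [], _ => fun _ ↦ ⟨1, funext fun i ↦ Fin.elim0 i⟩
  | n :: ns, h =>
    (finConsMulEquiv ℤˣ ns.length).surjective.comp <| wreathSignHom_surjective (h n (by simp))
      (iwSigns_surjective ns fun m hm ↦ h m (List.mem_cons_of_mem n hm))

noncomputable def intUnitsMulEquiv : ℤˣ ≃* Multiplicative (ZMod 2) :=
  mulEquivOfPrimeCardEq (p := 2) (by simp [Nat.card_eq_fintype_card, Fintype.card_units_int])
    (by simp [Nat.card_eq_fintype_card])

/-- For `n₁,…,n_k ≥ 2` the rank of the iterated wreath product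
`S_{n_k} ≀ ⋯ ≀ S_{n_1}` is at least `k`. -/
theorem iw_rank_ge (ns : List ℕ) (h : ∀ n ∈ ns, 2 ≤ n) :
    (ns.length : Cardinal) ≤ grpRank (IW ns) := by
  let parity : (Fin ns.length → ℤˣ) ≃* Multiplicative (Fin ns.length → ZMod 2) :=
    (MulEquiv.piCongrRight fun _ ↦ intUnitsMulEquiv).trans (MulEquiv.funMultiplicative _ _).symm
  calc (ns.length : Cardinal) = Module.rank (ZMod 2) (Fin ns.length → ZMod 2) :=
        (rank_fin_fun _).symm
    _ ≤ grpRank (Multiplicative (Fin ns.length → ZMod 2)) :=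
        rank_le_grpRank_multiplicative _ _
    _ ≤ grpRank (Fin ns.length → ℤˣ) :=
        grpRank_le_of_surjective parity.toMonoidHom parity.surjective
    _ ≤ grpRank (IW ns) := grpRank_le_of_surjective _ (iwSigns_surjective ns h)
end
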